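/- In coordinates (x, σ, y_1, y_2) near the b-face of X²_b away from the left and right boundaries (x = x_1 the left boundary defining function, σ = x_1/x_2 ∈ [C^{-1}, C]), the 1c-1c canonical 1-form ξ_1 dx_1/x_1³ + η_1 dy_1/x_1 + ξ_2 dx_2/x_2³ + η_2 dy_2/x_2 with x_2 = x/σ equals (ξ_1 + σ²ξ_2) dx/x³ − (σξ_2) dσ/x² + η_1 dy_1/x + ση_2 dy_2/x. Consequently, contracting the symplectic form (the differential of this 1-form) with −x³∂_x and restricting to {x = 0} yields dξ_1 + σ² dξ_2, which is a contact 1-form on ℝ³_{ξ_1, ξ_2, σ} (σ > 0). -/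

import Mathlib

open scoped RealInnerProductSpace

noncomputable section

/-- Coordinates `(x, σ, y₁, y₂)` near the b-face of `X²_b` together with 1c-1c fibre
coordinates `(ξ₁, η₁, ξ₂, η₂)` (also used for tangent vectors). -/
structure BPt (m : ℕ) where
  x : ℝ
  sg : ℝ
  y1 : EuclideanSpace ℝ (Fin m)
  y2 : EuclideanSpace ℝ (Fin m)
  xi1 : ℝ
  xi2 : ℝ
  eta1 : EuclideanSpace ℝ (Fin m)
  eta2 : EuclideanSpace ℝ (Fin m)

/-- The 1c-1c canonical 1-form `ξ₁ dx₁/x₁³ + η₁·dy₁/x₁ + ξ₂ dx₂/x₂³ + η₂·dy₂/x₂`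
with `x₁ = x`, `x₂ = x/σ` (so `dx₂ = dx/σ - x dσ/σ²`). -/
def canForm {m : ℕ} (p v : BPt m) : ℝ :=
  p.xi1 * v.x / p.x ^ 3 + ⟪p.eta1, v.y1⟫ / p.x
    + p.xi2 * (v.x / p.sg - p.x * v.sg / p.sg ^ 2) / (p.x / p.sg) ^ 3
    + ⟪p.eta2, v.y2⟫ / (p.x / p.sg)

/-- The 1c-1c symplectic form (the differential of the canonical 1-form),
`ω = dξ₁∧dx/x³ + d(η₁/x)∧dy₁ + d(σ³ξ₂/x³)∧d(x/σ) + d(ση₂/x)∧dy₂`, in coordinates. -/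
def omegaB {m : ℕ} (p u v : BPt m) : ℝ :=
  (u.xi1 * v.x - v.xi1 * u.x) / p.x ^ 3
    + ((⟪u.eta1, v.y1⟫ / p.x - u.x / p.x ^ 2 * ⟪p.eta1, v.y1⟫)
        - (⟪v.eta1, u.y1⟫ / p.x - v.x / p.x ^ 2 * ⟪p.eta1, u.y1⟫))
    + (((3 * p.sg ^ 2 * p.xi2 * u.sg + p.sg ^ 3 * u.xi2) / p.x ^ 3
          - 3 * p.sg ^ 3 * p.xi2 * u.x / p.x ^ 4) * (v.x / p.sg - p.x * v.sg / p.sg ^ 2)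
        - ((3 * p.sg ^ 2 * p.xi2 * v.sg + p.sg ^ 3 * v.xi2) / p.x ^ 3
          - 3 * p.sg ^ 3 * p.xi2 * v.x / p.x ^ 4) * (u.x / p.sg - p.x * u.sg / p.sg ^ 2))
    + (⟪p.x⁻¹ • (u.sg • p.eta2 + p.sg • u.eta2) - (p.sg * u.x / p.x ^ 2) • p.eta2, v.y2⟫
        - ⟪p.x⁻¹ • (v.sg • p.eta2 + p.sg • v.eta2) - (p.sg * v.x / p.x ^ 2) • p.eta2, u.y2⟫)

/-- The vector field `-x³∂_x`. -/
def contractFieldB {m : ℕ} (p : BPt m) : BPt m := ⟨-p.x ^ 3, 0, 0, 0, 0, 0, 0, 0⟩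

/-- The 1-form `α = dξ₁ + σ²dξ₂` on `ℝ³` with coordinates `(ξ₁, ξ₂, σ)`. -/
def alphaB (q v : ℝ × ℝ × ℝ) : ℝ := v.1 + q.2.2 ^ 2 * v.2.1

/-- Its exterior derivative `dα = 2σ dσ∧dξ₂`. -/
def dalphaB (q u v : ℝ × ℝ × ℝ) : ℝ := 2 * q.2.2 * (u.2.2 * v.2.1 - v.2.2 * u.2.1)

/-! Substituting `x₁ = x`, `x₂ = x/σ` into the canonical 1-form is a direct computation.
Contracting `ω` with `-x³∂_x` only sees the `dx`-components, where the factor `x³` cancels the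
`x⁻³` of the 1-cusp frame: what survives at `x = 0` is `dξ₁ + σ²dξ₂`. Its differential is
`dα = 2σ dσ ∧ dξ₂`, so `α ∧ dα = -2σ dξ₁ ∧ dξ₂ ∧ dσ`, which vanishes nowhere on `{σ > 0}`. -/

section BFace

variable {m : ℕ} (p v : BPt m)

-- Also true at `σ = 0`, where `x / σ = 0` by convention and both sides lose their `x₂`-terms.
theorem canForm_eq (hx : p.x ≠ 0) :
    canForm p v
      = (p.xi1 + p.sg ^ 2 * p.xi2) * v.x / p.x ^ 3 - p.sg * p.xi2 * v.sg / p.x ^ 2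
        + ⟪p.eta1, v.y1⟫ / p.x + p.sg * ⟪p.eta2, v.y2⟫ / p.x := by
  simp only [canForm]
  field_simp
  ring

theorem omegaB_contractFieldB (hx : p.x ≠ 0) :
    omegaB p (contractFieldB p) v
      = v.xi1 + p.sg ^ 2 * v.xi2 + p.x * (⟪p.eta1, v.y1⟫ + p.sg * ⟪p.eta2, v.y2⟫) := by
  simp only [omegaB, contractFieldB, inner_zero_left, inner_zero_right, inner_neg_left,
    real_inner_smul_left, smul_zero, zero_smul, add_zero, mul_zero, zero_mul, sub_zero,
    zero_sub, zero_div]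
  field_simp
  ring

end BFace

theorem alphaB_wedge_dalphaB_basis (q : ℝ × ℝ × ℝ) :
    alphaB q (1, 0, 0) * dalphaB q (0, 1, 0) (0, 0, 1)
      - alphaB q (0, 1, 0) * dalphaB q (1, 0, 0) (0, 0, 1)
      + alphaB q (0, 0, 1) * dalphaB q (1, 0, 0) (0, 1, 0) = -2 * q.2.2 := by
  simp only [alphaB, dalphaB]
  ring

/-- the 1c-1c canonical 1-form equals
`(ξ₁+σ²ξ₂)dx/x³ - σξ₂ dσ/x² + η₁·dy₁/x + ση₂·dy₂/x`; consequently, contracting the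
symplectic form with `-x³∂_x` yields `dξ₁ + σ²dξ₂ + x(η₁·dy₁ + ση₂·dy₂)`, which at
`x = 0` is `dξ₁ + σ²dξ₂`, a contact 1-form on `ℝ³_{ξ₁,ξ₂,σ}` for `σ > 0`
(`α ∧ dα ≠ 0`: nonzero on the standard basis at every point with `σ > 0`). -/
theorem stmt18 (m : ℕ) :
    (∀ p : BPt m, 0 < p.x → 0 < p.sg → ∀ v : BPt m,
      canForm p v
        = (p.xi1 + p.sg ^ 2 * p.xi2) * v.x / p.x ^ 3 - p.sg * p.xi2 * v.sg / p.x ^ 2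
          + ⟪p.eta1, v.y1⟫ / p.x + p.sg * ⟪p.eta2, v.y2⟫ / p.x) ∧
    (∀ p : BPt m, 0 < p.x → 0 < p.sg → ∀ v : BPt m,
      omegaB p (contractFieldB p) v
        = v.xi1 + p.sg ^ 2 * v.xi2 + p.x * (⟪p.eta1, v.y1⟫ + p.sg * ⟪p.eta2, v.y2⟫)) ∧
    (∀ p : ℝ × ℝ × ℝ, 0 < p.2.2 →
      alphaB p (1, 0, 0) * dalphaB p (0, 1, 0) (0, 0, 1)
        - alphaB p (0, 1, 0) * dalphaB p (1, 0, 0) (0, 0, 1)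
        + alphaB p (0, 0, 1) * dalphaB p (1, 0, 0) (0, 1, 0) ≠ 0) := by
  refine ⟨fun p hx _ v => canForm_eq p v hx.ne',
    fun p hx _ v => omegaB_contractFieldB p v hx.ne', fun q hσ => ?_⟩
  rw [alphaB_wedge_dalphaB_basis]
  exact mul_ne_zero (by norm_num) hσ.ne'
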